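/- Suppose a nonnegative sequence L(t) with L(0) = 0 satisfies, for all t, L(t+1) - L(t) - V·H(t) ≤ C - V·H*, where V > 0, C ≥ 0 and H(t) is a bounded real sequence. Then H* - liminf_{T→∞} (1/T)·∑_{t=0}^{T-1} H(t) ≤ C/V. -/
import Mathlib


open Filter

theorem drift_plus_penalty_throughput_bound (L H : ℕ → ℝ) (V C Hstar : ℝ)
    (hLpos : ∀ t, 0 ≤ L t) (hL0 : L 0 = 0)
    (hV : 0 < V) (hC : 0 ≤ C)
    (hHbd : ∃ B : ℝ, ∀ t, |H t| ≤ B)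
    (hdrift : ∀ t, L (t + 1) - L t - V * H t ≤ C - V * Hstar) :
    Hstar - liminf (fun T : ℕ => (1 / (T : ℝ)) * ∑ t ∈ Finset.range T, H t) atTop ≤ C / V := by
  obtain ⟨B, hB⟩ := hHbd
  have key : ∀ T : ℕ, 1 ≤ T → Hstar - C / V ≤ (1 / (T : ℝ)) * ∑ t ∈ Finset.range T, H t := by
    intro T hT
    have hTpos : (0 : ℝ) < T := by exact_mod_cast hT
    have hsum : ∀ n : ℕ, L n - V * ∑ t ∈ Finset.range n, H t ≤ n * (C - V * Hstar) := by
      intro n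
      induction n with
      | zero => simp [hL0]
      | succ n ih =>
        have := hdrift n
        have : L (n+1) - V * ∑ t ∈ Finset.range (n+1), H t
            ≤ (L n - V * ∑ t ∈ Finset.range n, H t) + (C - V * Hstar) := by
          rw [Finset.sum_range_succ]; nlinarith
        push_cast
        linarith
    have h1 := hsum T
    have h2 := hLpos T
    have : (T : ℝ) * (V * Hstar - C) ≤ V * ∑ t ∈ Finset.range T, H t := by nlinarith
    rw [one_div, inv_mul_eq_div, le_div_iff₀ hTpos]
    have hCV : C / V * V = C := div_mul_cancel₀ _ (ne_of_gt hV)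
    nlinarith
  have hev : ∀ᶠ T : ℕ in atTop, Hstar - C / V ≤ (1 / (T : ℝ)) * ∑ t ∈ Finset.range T, H t :=
    eventually_atTop.2 ⟨1, key⟩
  have hcb : IsCoboundedUnder (· ≥ ·) atTop
      (fun T : ℕ => (1 / (T : ℝ)) * ∑ t ∈ Finset.range T, H t) := by
    apply Filter.isCoboundedUnder_ge_of_eventually_le atTop (x := B)
    refine eventually_atTop.2 ⟨1, fun T hT => ?_⟩
    have hTpos : (0 : ℝ) < T := by exact_mod_cast hT
    have : |∑ t ∈ Finset.range T, H t| ≤ T * B := by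
      calc |∑ t ∈ Finset.range T, H t| ≤ ∑ t ∈ Finset.range T, |H t| :=
            Finset.abs_sum_le_sum_abs _ _
        _ ≤ ∑ _t ∈ Finset.range T, B := Finset.sum_le_sum fun t _ => hB t
        _ = T * B := by simp [mul_comm]
    have h2 := (abs_le.1 this).2
    rw [one_div, inv_mul_eq_div, div_le_iff₀ hTpos]
    linarith [h2, mul_comm (T:ℝ) B]
  have := le_liminf_of_le hcb hev
  linarith
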